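/- Let g be an M♮-convex function with finite nonempty effective domain and let b : E → {0,1}. Let k be an integer with k̲ + 1 ≤ k ≤ k̄, let x_k ∈ 𝒯_k, and let (u*, v*) be a minimum transition with respect to x_k. Then x_k − χ_{u*} + χ_{v*} ∈ 𝒯_{k−1}. -/

import Mathlib

open scoped BigOperators

/-- Characteristic vector of a singleton `{u}`. -/
def chiv {E : Type*} [DecidableEq E] (u : E) : E → ℤ := fun e => if e = u then 1 else 0

/-- Characteristic vector allowing the dummy symbol `z` (modelled as `none`), with `χ_z = 0`. -/
def chiOpt {E : Type*} [DecidableEq E] (v : Option E) : E → ℤ :=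
  fun e => match v with
  | none => 0
  | some w => chiv w e

/-- M♮-convexity (with nonempty effective domain) for `g : (E → ℤ) → ℝ ∪ {+∞}`. -/
def MnatConvex {E : Type*} [DecidableEq E] (g : (E → ℤ) → WithTop ℝ) : Prop :=
  (∃ x, g x < ⊤) ∧
  ∀ x y : E → ℤ, g x < ⊤ → g y < ⊤ → ∀ u : E, y u < x u →
    (g (x - chiv u) + g (y + chiv u) ≤ g x + g y) ∨
    (∃ v : E, x v < y v ∧
      g (x - chiv u + chiv v) + g (y + chiv u - chiv v) ≤ g x + g y)

/-- `⟨b,x⟩ = ∑ e, b e * x e`. -/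
def innerb {E : Type*} [Fintype E] (b : E → ℤ) (x : E → ℤ) : ℤ := ∑ e, b e * x e

/-- `𝒯_i`: the minimizers of `g` on `𝒫_i = {x ∈ dom g : ⟨b,x⟩ = i}`. -/
def Tset {E : Type*} [Fintype E] (g : (E → ℤ) → WithTop ℝ) (b : E → ℤ) (i : ℤ) :
    Set (E → ℤ) :=
  {x | g x < ⊤ ∧ innerb b x = i ∧ ∀ y : E → ℤ, g y < ⊤ → innerb b y = i → g x ≤ g y}

/-- A transition `(u,v)` with respect to `x`: `u ∈ E₁`, `v ∈ E₀ ∪ {z}`, and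
`x - χ_u + χ_v ∈ dom g`. -/
def IsTransition {E : Type*} [DecidableEq E] (g : (E → ℤ) → WithTop ℝ) (b : E → ℤ)
    (x : E → ℤ) (u : E) (v : Option E) : Prop :=
  b u = 1 ∧ (∀ w : E, v = some w → b w = 0) ∧ g (x - chiv u + chiOpt v) < ⊤

/-- The cost `g(x;u,v) = g(x - χ_u + χ_v) - g(x)` of a transition (as a real number;
both values are finite for transitions with respect to `x ∈ dom g`). -/
noncomputable def transCost {E : Type*} [DecidableEq E] (g : (E → ℤ) → WithTop ℝ)
    (x : E → ℤ) (u : E) (v : Option E) : ℝ :=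
  (g (x - chiv u + chiOpt v)).untopD 0 - (g x).untopD 0

/-- A minimum transition with respect to `x`. -/
def IsMinTransition {E : Type*} [Fintype E] [DecidableEq E] (g : (E → ℤ) → WithTop ℝ)
    (b : E → ℤ) (x : E → ℤ) (u : E) (v : Option E) : Prop :=
  IsTransition g b x u v ∧
    ∀ (u' : E) (v' : Option E), IsTransition g b x u' v' →
      transCost g x u v ≤ transCost g x u' v'

/-!
Let `x ∈ 𝒯_k`, let `y* = x - χ_{u*} + χ_{v*}` and let `y` be any point of `dom g` on level
`k - 1`. Some `u ∈ E₁` has `y u < x u`, and the exchange axiom at `(x, y, u)` gives a pair of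
points `x' = x - χ_u + χ_w`, `y' = y + χ_u - χ_w` with `g x' + g y' ≤ g x + g y`. If `w ∈ E₀ ∪ {z}`,
then `(u, w)` is a transition, so `g y* ≤ g x'`, while `y'` lies on level `k`, so `g x ≤ g y'`;
together `g y* ≤ g y`. If instead `w ∈ E₁`, then `x'` lies on level `k`, so `g x ≤ g x'` and
hence `g y' ≤ g y`, where `y'` is again on level `k - 1` but strictly closer to `x` in `ℓ₁`;
induction on that distance finishes the argument.
-/

@[simp] lemma chiOpt_none {E : Type*} [DecidableEq E] : chiOpt (none : Option E) = 0 := rfl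

@[simp] lemma chiOpt_some {E : Type*} [DecidableEq E] (v : E) : chiOpt (some v) = chiv v := rfl

section Levels

variable {E : Type*} [Fintype E]

lemma innerb_add (b x y : E → ℤ) : innerb b (x + y) = innerb b x + innerb b y := by
  simp only [innerb, Pi.add_apply, mul_add, Finset.sum_add_distrib]

lemma innerb_sub (b x y : E → ℤ) : innerb b (x - y) = innerb b x - innerb b y := by
  simp only [innerb, Pi.sub_apply, mul_sub, Finset.sum_sub_distrib]

lemma exists_lt_of_innerb_eq_add_one {b x y : E → ℤ} (hb : ∀ e, b e = 0 ∨ b e = 1)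
    (h : innerb b x = innerb b y + 1) : ∃ u, b u = 1 ∧ y u < x u := by
  by_contra! hle
  have : innerb b (x - y) ≤ 0 := by
    refine Finset.sum_nonpos fun e _ => ?_
    rcases hb e with h0 | h1
    · simp [h0]
    · simpa [h1] using hle e h1
  rw [innerb_sub] at this
  omega

variable [DecidableEq E]

lemma innerb_chiv (b : E → ℤ) (u : E) : innerb b (chiv u) = b u := by
  simp [innerb, chiv]

lemma innerb_chiOpt_eq_zero {b : E → ℤ} {w : Option E} (hw : ∀ v, w = some v → b v = 0) :
    innerb b (chiOpt w) = 0 := by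
  cases w with
  | none => simp [innerb]
  | some v => exact (innerb_chiv b v).trans (hw v rfl)

lemma sum_natAbs_sub_add_chiv_sub_chiv_lt {x y : E → ℤ} {u v : E} (hu : y u < x u)
    (hv : x v < y v) :
    ∑ e, (x e - (y + chiv u - chiv v) e).natAbs < ∑ e, (x e - y e).natAbs := by
  have huv : u ≠ v := by rintro rfl; omega
  refine Finset.sum_lt_sum (fun e _ => ?_) ⟨u, Finset.mem_univ u, ?_⟩ <;>
  · simp only [chiv, Pi.add_apply, Pi.sub_apply]
    split_ifs <;> subst_vars <;> omega

end Levels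

lemma WithTop.le_of_add_le_add_of_le {α : Type*} [AddCommMonoid α] [PartialOrder α]
    [IsOrderedCancelAddMonoid α] {a b c d : WithTop α} (ha : a ≠ ⊤) (h : c + d ≤ a + b)
    (had : a ≤ d) : c ≤ b := by
  rw [← WithTop.add_le_add_iff_left ha, add_comm a c]
  exact (add_le_add_right had c).trans h

section Transitions

variable {E : Type*} [DecidableEq E] {g : (E → ℤ) → WithTop ℝ}

lemma MnatConvex.exists_exchange (hg : MnatConvex g) {x y : E → ℤ} (hx : g x < ⊤)
    (hy : g y < ⊤) {u : E} (hu : y u < x u) :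
    ∃ w : Option E, (∀ v, w = some v → x v < y v) ∧
      g (x - chiv u + chiOpt w) + g (y + chiv u - chiOpt w) ≤ g x + g y := by
  rcases hg.2 x y hx hy u hu with h | ⟨v, hv, h⟩
  · exact ⟨none, by simp, by simpa using h⟩
  · exact ⟨some v, by simpa using hv, h⟩

variable [Fintype E]

lemma IsMinTransition.le_of_isTransition {b x : E → ℤ} {us u : E} {vs w : Option E}
    (hmin : IsMinTransition g b x us vs) (htr : IsTransition g b x u w) :
    g (x - chiv us + chiOpt vs) ≤ g (x - chiv u + chiOpt w) := by
  have hcost := hmin.2 u w htr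
  lift g (x - chiv us + chiOpt vs) to ℝ using hmin.1.2.2.ne with s hs
  lift g (x - chiv u + chiOpt w) to ℝ using htr.2.2.ne with t ht
  rw [transCost, transCost, ← hs, ← ht, WithTop.untopD_coe, WithTop.untopD_coe] at hcost
  exact WithTop.coe_le_coe.mpr (by linarith)

theorem le_of_isMinTransition {b : E → ℤ} (hb : ∀ e, b e = 0 ∨ b e = 1) (hg : MnatConvex g)
    {k : ℤ} {x : E → ℤ} (hx : x ∈ Tset g b k) {us : E} {vs : Option E}
    (hmin : IsMinTransition g b x us vs) (y : E → ℤ) (hy : g y < ⊤)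
    (hyk : innerb b y = k - 1) : g (x - chiv us + chiOpt vs) ≤ g y := by
  have ⟨hxfin, hxk, hxmin⟩ := hx
  obtain ⟨u, hbu, hu⟩ :=
    exists_lt_of_innerb_eq_add_one hb (show innerb b x = innerb b y + 1 by omega)
  obtain ⟨w, hw, hexch⟩ := hg.exists_exchange hxfin hy hu
  obtain ⟨hx'fin, hy'fin⟩ :=
    WithTop.add_lt_top.mp (hexch.trans_lt (WithTop.add_lt_top.mpr ⟨hxfin, hy⟩))
  by_cases hw0 : ∀ v, w = some v → b v = 0
  · have hy'k : innerb b (y + chiv u - chiOpt w) = k := by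
      rw [innerb_sub, innerb_add, innerb_chiv, innerb_chiOpt_eq_zero hw0]
      omega
    calc g (x - chiv us + chiOpt vs) ≤ g (x - chiv u + chiOpt w) :=
          hmin.le_of_isTransition ⟨hbu, hw0, hx'fin⟩
      _ ≤ g y := WithTop.le_of_add_le_add_of_le hxfin.ne hexch (hxmin _ hy'fin hy'k)
  · push Not at hw0
    obtain ⟨v, rfl, hbv⟩ := hw0
    have hbv : b v = 1 := (hb v).resolve_left hbv
    have hx'k : innerb b (x - chiv u + chiOpt (some v)) = k := by
      rw [innerb_add, innerb_sub, innerb_chiv, chiOpt_some, innerb_chiv]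
      omega
    have hy'k : innerb b (y + chiv u - chiOpt (some v)) = k - 1 := by
      rw [innerb_sub, innerb_add, innerb_chiv, chiOpt_some, innerb_chiv]
      omega
    calc g (x - chiv us + chiOpt vs) ≤ g (y + chiv u - chiOpt (some v)) :=
          le_of_isMinTransition hb hg hx hmin _ hy'fin hy'k
      _ ≤ g y := WithTop.le_of_add_le_add_of_le hxfin.ne (by rwa [add_comm] at hexch)
          (hxmin _ hx'fin hx'k)
termination_by ∑ e, (x e - y e).natAbs
decreasing_by exact sum_natAbs_sub_add_chiv_sub_chiv_lt hu (hw v rfl)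

end Transitions

theorem stmt_3_general {E : Type*} [Fintype E] [DecidableEq E]
    (g : (E → ℤ) → WithTop ℝ) (b : E → ℤ)
    (hg : MnatConvex g)
    (hb : ∀ e : E, b e = 0 ∨ b e = 1)
    (k : ℤ)
    (xk : E → ℤ) (hxk : xk ∈ Tset g b k)
    (us : E) (vs : Option E) (hmin : IsMinTransition g b xk us vs) :
    xk - chiv us + chiOpt vs ∈ Tset g b (k - 1) := by
  have hlevel : innerb b (xk - chiv us + chiOpt vs) = k - 1 := by
    rw [innerb_add, innerb_sub, innerb_chiv, innerb_chiOpt_eq_zero hmin.1.2.1, hxk.2.1, hmin.1.1]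
    ring
  exact ⟨hmin.1.2.2, hlevel, le_of_isMinTransition hb hg hxk hmin⟩

/-- applying a minimum transition to `x_k ∈ 𝒯_k` (with `k̲+1 ≤ k ≤ k̄`)
yields a point of `𝒯_{k-1}`. -/
theorem stmt_3 {E : Type*} [Fintype E] [DecidableEq E] [Nonempty E]
    (g : (E → ℤ) → WithTop ℝ) (b : E → ℤ)
    (hg : MnatConvex g)
    (hfin : {x : E → ℤ | g x < ⊤}.Finite)
    (hb : ∀ e : E, b e = 0 ∨ b e = 1)
    (kmin kmax : ℤ)
    (hkmin : (Tset g b kmin).Nonempty ∧ ∀ k : ℤ, (Tset g b k).Nonempty → kmin ≤ k)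
    (hkmax : (Tset g b kmax).Nonempty ∧ ∀ k : ℤ, (Tset g b k).Nonempty → k ≤ kmax)
    (k : ℤ) (hk1 : kmin + 1 ≤ k) (hk2 : k ≤ kmax)
    (xk : E → ℤ) (hxk : xk ∈ Tset g b k)
    (us : E) (vs : Option E) (hmin : IsMinTransition g b xk us vs) :
    xk - chiv us + chiOpt vs ∈ Tset g b (k - 1) :=
  stmt_3_general g b hg hb k xk hxk us vs hmin
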